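/- Let b ∈ ℝ with b² < 1 and let (X_i)_{i∈ℤ} be a bounded real sequence with sup_i |X_i| ≤ M and |b|·M < 1. Define ε_i = X_i + Σ_{j≥1} (−b)^j X_{i−j} ∏_{k=1}^{j} X_{i−k−1}. Then the series converges absolutely and X_i = b X_{i−2} ( X_{i−1} + Σ_{j≥1} (−b)^j X_{i−j−1} ∏_{k=1}^{j} X_{i−k−2} ) + ε_i. -/

import Mathlib

/-!
Write `ε_i = X_i + S_i`, where `S_i` is the series. Its terms satisfy
`T_i(j + 1) = -b X_{i-2} T_{i-1}(j)` and `T_i(0) = -b X_{i-2} X_{i-1}`, so peeling off the first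
term gives `S_i = -b X_{i-2} (X_{i-1} + S_{i-1})`, which is the identity. Absolute convergence
comes from the geometric bound `|T_i(j)| ≤ M (|b| M)^(j+1)`.
-/

open Finset

namespace SubdiagonalBilinear

section Algebra

variable {R : Type*} [CommRing R]

/-- The term of index `j + 1` in the series defining `ε_i`. -/
def invTerm (b : R) (X : ℤ → R) (i : ℤ) (j : ℕ) : R :=
  (-b) ^ (j + 1) * X (i - (j + 1)) * ∏ k ∈ Icc 1 (j + 1), X (i - (k : ℤ) - 1)

theorem prod_Icc_succ_eq_mul_prod_shift {M : Type*} [CommMonoid M] (X : ℤ → M) (i : ℤ)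
    (n : ℕ) :
    ∏ k ∈ Icc 1 (n + 1), X (i - (k : ℤ) - 1) =
      X (i - 2) * ∏ k ∈ Icc 1 n, X (i - 1 - (k : ℤ) - 1) := by
  induction n with
  | zero =>
    norm_num
    ring_nf
  | succ n ih =>
    rw [prod_Icc_succ_top (by omega), ih, prod_Icc_succ_top (by omega), mul_assoc]
    congr 3
    push_cast
    ring

theorem invTerm_zero (b : R) (X : ℤ → R) (i : ℤ) :
    invTerm b X i 0 = -b * X (i - 2) * X (i - 1) := by
  simp only [invTerm, zero_add, pow_one, Nat.cast_zero, Icc_self, prod_singleton, Nat.cast_one]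
  ring_nf

theorem invTerm_succ (b : R) (X : ℤ → R) (i : ℤ) (j : ℕ) :
    invTerm b X i (j + 1) = -b * X (i - 2) * invTerm b X (i - 1) j := by
  simp only [invTerm]
  rw [prod_Icc_succ_eq_mul_prod_shift, show i - ((j + 1 : ℕ) + 1 : ℤ) = i - 1 - (j + 1) by
    push_cast; ring]
  ring

end Algebra

theorem abs_invTerm_le {b M : ℝ} {X : ℤ → ℝ} (hM : ∀ i, |X i| ≤ M) (i : ℤ) (j : ℕ) :
    |invTerm b X i j| ≤ M * (|b| * M) ^ (j + 1) := by
  have hM0 : 0 ≤ M := (abs_nonneg _).trans (hM 0)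
  have hprod : |∏ k ∈ Icc 1 (j + 1), X (i - (k : ℤ) - 1)| ≤ M ^ (j + 1) := by
    rw [abs_prod]
    calc ∏ k ∈ Icc 1 (j + 1), |X (i - (k : ℤ) - 1)|
        ≤ ∏ _k ∈ Icc 1 (j + 1), M := prod_le_prod (fun _ _ => abs_nonneg _) fun _ _ => hM _
      _ = M ^ (j + 1) := by rw [prod_const, Nat.card_Icc, Nat.add_sub_cancel]
  rw [invTerm, abs_mul, abs_mul, abs_pow, abs_neg, mul_pow]
  calc |b| ^ (j + 1) * |X (i - (j + 1))| * |∏ k ∈ Icc 1 (j + 1), X (i - (k : ℤ) - 1)|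
      ≤ |b| ^ (j + 1) * M * M ^ (j + 1) := by gcongr; exact hM _
    _ = M * (|b| ^ (j + 1) * M ^ (j + 1)) := by ring

theorem summable_invTerm {b M : ℝ} {X : ℤ → ℝ} (hM : ∀ i, |X i| ≤ M) (hbM : |b| * M < 1)
    (i : ℤ) : Summable (invTerm b X i) := by
  have hbM0 : 0 ≤ |b| * M := mul_nonneg (abs_nonneg b) ((abs_nonneg _).trans (hM 0))
  have hgeom : Summable fun j : ℕ => M * (|b| * M) ^ (j + 1) := by
    simpa only [pow_succ', ← mul_assoc] using
      (summable_geometric_of_lt_one hbM0 hbM).mul_left (M * (|b| * M))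
  exact hgeom.of_norm_bounded fun j => abs_invTerm_le hM i j

theorem tsum_invTerm_eq {b M : ℝ} {X : ℤ → ℝ} (hM : ∀ i, |X i| ≤ M) (hbM : |b| * M < 1)
    (i : ℤ) :
    ∑' j, invTerm b X i j = -b * X (i - 2) * (X (i - 1) + ∑' j, invTerm b X (i - 1) j) := by
  rw [(summable_invTerm hM hbM i).tsum_eq_zero_add, invTerm_zero]
  simp only [invTerm_succ, tsum_mul_left]
  ring

end SubdiagonalBilinear

open SubdiagonalBilinear in
theorem stmt_3_general (b : ℝ) (X ε : ℤ → ℝ) (M : ℝ)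
    (hM : ∀ i, |X i| ≤ M) (hbM : |b| * M < 1)
    (hε : ∀ i : ℤ, ε i = X i + ∑' j : ℕ,
      (-b) ^ (j + 1) * X (i - (j + 1)) * ∏ k ∈ Finset.Icc 1 (j + 1), X (i - (k : ℤ) - 1)) :
    (∀ i : ℤ, Summable (fun j : ℕ =>
      (-b) ^ (j + 1) * X (i - (j + 1)) * ∏ k ∈ Finset.Icc 1 (j + 1), X (i - (k : ℤ) - 1))) ∧
    (∀ i : ℤ, X i = b * X (i - 2) * (X (i - 1) + ∑' j : ℕ,
      (-b) ^ (j + 1) * X (i - (j + 1) - 1) *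
        ∏ k ∈ Finset.Icc 1 (j + 1), X (i - (k : ℤ) - 2)) + ε i) := by
  refine ⟨summable_invTerm hM hbM, fun i => ?_⟩
  have hshift : (fun j : ℕ => (-b) ^ (j + 1) * X (i - (j + 1) - 1) *
      ∏ k ∈ Finset.Icc 1 (j + 1), X (i - (k : ℤ) - 2)) = invTerm b X (i - 1) := by
    ext j
    rw [invTerm]
    congr 2
    · ring_nf
    · ext k
      ring_nf
  have hε' : ε i = X i + ∑' j, invTerm b X i j := hε i
  rw [hshift, hε', tsum_invTerm_eq hM hbM i]
  ring

theorem stmt_3 (b : ℝ) (hb : b ^ 2 < 1) (X ε : ℤ → ℝ) (M : ℝ)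
    (hM : ∀ i, |X i| ≤ M) (hbM : |b| * M < 1)
    (hε : ∀ i : ℤ, ε i = X i + ∑' j : ℕ,
      (-b) ^ (j + 1) * X (i - (j + 1)) * ∏ k ∈ Finset.Icc 1 (j + 1), X (i - (k : ℤ) - 1)) :
    (∀ i : ℤ, Summable (fun j : ℕ =>
      (-b) ^ (j + 1) * X (i - (j + 1)) * ∏ k ∈ Finset.Icc 1 (j + 1), X (i - (k : ℤ) - 1))) ∧
    (∀ i : ℤ, X i = b * X (i - 2) * (X (i - 1) + ∑' j : ℕ,
      (-b) ^ (j + 1) * X (i - (j + 1) - 1) *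
        ∏ k ∈ Finset.Icc 1 (j + 1), X (i - (k : ℤ) - 2)) + ε i) :=
  stmt_3_general b X ε M hM hbM hε
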